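/- arXiv:1204.3057 — 2 statements merged into one kernel-verified Lean document; each statement's English description precedes it below -/
import Mathlib

section
/- Let q be a prime power, r = 2s+1 odd, and a ∈ F_{q^r}. Then for all x,y ∈ F_{q^r}: Tr(ax)·Tr(ay) = Tr(a^2·xy) + Σ_{j=1}^{s} Tr(a^{1+q^j}·(x y^{q^j} + x^{q^j} y)), where Tr is the trace from F_{q^r} to F_q. -/
/-!
Writing `algebraMap (Tr v) = ∑ σ v` over the Galois group and using `K`-linearity of the trace,
`Tr u · Tr v = ∑_σ Tr (u · σ v)`. Over a finite field the Galois group is cyclic of order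
`2s + 1`, generated by the Frobenius `φ`, so it splits as `{1} ∪ {φ^j} ∪ {φ^{-j}}` for
`1 ≤ j ≤ s`; invariance of the trace under `φ^j` turns `Tr (u · φ^{-j} v)` into
`Tr (φ^j u · v)`. Take `u = a x` and `v = a y`.
-/

open Finset

theorem Finset.sum_range_two_mul_add_one {M : Type*} [AddCommMonoid M] (s : ℕ) (f : ℕ → M) :
    ∑ i ∈ range (2 * s + 1), f i = f 0 + ∑ j ∈ Icc 1 s, (f j + f (2 * s + 1 - j)) := by
  rw [sum_range_succ', add_comm, two_mul, sum_range_add, sum_add_distrib,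
    ← Ico_add_one_right_eq_Icc, sum_Ico_eq_sum_range, sum_Ico_eq_sum_range, Nat.add_sub_cancel]
  congr 2
  · exact sum_congr rfl fun i _ => by rw [add_comm]
  · rw [← sum_range_reflect]
    exact sum_congr rfl fun i hi => by rw [mem_range] at hi; congr 1; omega

theorem sum_range_pow_eq_add_sum_Icc {G M : Type*} [Group G] [AddCommMonoid M] {g : G} {s : ℕ}
    (hg : orderOf g = 2 * s + 1) (f : G → M) :
    ∑ i ∈ range (2 * s + 1), f (g ^ i) = f 1 + ∑ j ∈ Icc 1 s, (f (g ^ j) + f (g ^ j)⁻¹) := by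
  rw [Finset.sum_range_two_mul_add_one, pow_zero]
  refine congrArg _ (sum_congr rfl fun j hj => ?_)
  rw [mem_Icc] at hj
  rw [pow_sub g (by omega), ← hg, pow_orderOf_eq_one, one_mul]

namespace Algebra

variable {K L : Type*} [Field K] [Field L] [Algebra K L]

theorem trace_mul_trace_eq_sum_trace_mul_apply [FiniteDimensional K L] [IsGalois K L] (u v : L) :
    trace K L u * trace K L v = ∑ σ : Gal(L/K), trace K L (u * σ v) := by
  rw [mul_comm, ← smul_eq_mul, ← map_smul, Algebra.smul_def, trace_eq_sum_automorphisms, sum_mul,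
    map_sum]
  simp_rw [mul_comm]

theorem trace_mul_inv_apply (σ : Gal(L/K)) (u v : L) :
    trace K L (u * σ⁻¹ v) = trace K L (σ u * v) := by
  rw [← trace_eq_of_algEquiv σ, map_mul, AlgEquiv.aut_inv, AlgEquiv.apply_symm_apply]

end Algebra

namespace FiniteField

theorem sum_gal_eq_sum_range_frobenius_pow (K L : Type*) [Field K] [Fintype K] [Field L]
    [Finite L] [Algebra K L] {M : Type*} [AddCommMonoid M] (f : Gal(L/K) → M) :
    ∑ σ, f σ = ∑ i ∈ range (Module.finrank K L), f (frobeniusAlgEquivOfAlgebraic K L ^ i) := by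
  rw [sum_range]
  exact (Fintype.sum_bijective _ (bijective_frobeniusAlgEquivOfAlgebraic_pow K L) _ _
    fun _ => rfl).symm

end FiniteField

/-- for an odd-degree extension `F_{q^{2s+1}}/F_q` with trace `Tr`
and any `a`, `Tr(ax)·Tr(ay) = Tr(a²xy) + Σ_{j=1}^{s} Tr(a^{1+q^j}(xy^{q^j}+x^{q^j}y))`. -/
theorem stmt2 (q s : ℕ) (K L : Type*) [Field K] [Fintype K] [Field L] [Algebra K L]
    [FiniteDimensional K L] (hq : Fintype.card K = q)
    (hr : Module.finrank K L = 2 * s + 1) (a x y : L) :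
    Algebra.trace K L (a * x) * Algebra.trace K L (a * y) =
      Algebra.trace K L (a ^ 2 * (x * y)) +
        ∑ j ∈ Finset.Icc 1 s,
          Algebra.trace K L (a ^ (1 + q ^ j) * (x * y ^ q ^ j + x ^ q ^ j * y)) := by
  have : Finite L := Module.finite_of_finite K
  set φ := FiniteField.frobeniusAlgEquivOfAlgebraic K L
  have hφ_pow (n : ℕ) (z : L) : (φ ^ n) z = z ^ q ^ n := by
    rw [AlgEquiv.coe_pow, FiniteField.coe_frobeniusAlgEquivOfAlgebraic_iterate, hq]
  have hφ_order : orderOf φ = 2 * s + 1 :=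
    hr ▸ FiniteField.orderOf_frobeniusAlgEquivOfAlgebraic K L
  rw [Algebra.trace_mul_trace_eq_sum_trace_mul_apply,
    FiniteField.sum_gal_eq_sum_range_frobenius_pow, hr,
    sum_range_pow_eq_add_sum_Icc hφ_order fun σ ↦ Algebra.trace K L (a * x * σ (a * y)),
    AlgEquiv.one_apply]
  congr 1
  · congr 1; ring
  · refine sum_congr rfl fun j _ => ?_
    rw [Algebra.trace_mul_inv_apply, ← map_add, hφ_pow, hφ_pow]
    congr 1; ring
end

section
/- Let C ⊆ K^n be a nonzero linear code over a finite field K. Then for every t ≥ 1, dim(C^⟨t+1⟩) ≥ dim(C^⟨t⟩). -/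
/-!
Choose an information set of `C^⟨t⟩`: a basis `e k` and coordinates `s k` with
`e k (s l) = δ_kl` (the coordinate functionals restricted to `C^⟨t⟩` span its dual, so some of
them form a basis of it, and `e` is the dual basis). Since `t ≥ 1`, every coordinate on which
`C^⟨t⟩` is nonzero carries a codeword `c k ∈ C` with `c k (s k) ≠ 0`, and the products
`(c k (s k))⁻¹ • e k * c k ∈ C^⟨t+1⟩` are again biorthogonal to the coordinates `s`, hence
linearly independent.
-/

/-- Span of the set of coordinatewise products of a codeword of `C` and one of `D`. -/
def mulSpan {K ι : Type*} [Field K] (C D : Submodule K (ι → K)) :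
    Submodule K (ι → K) :=
  Submodule.span K {x | ∃ c ∈ C, ∃ d ∈ D, x = c * d}

/-- The `t`-th power `C^⟨t⟩` of a linear code `C`: the span of coordinatewise
products of `t` codewords of `C` (with `C^⟨0⟩` the repetition code). -/
def codePow {K ι : Type*} [Field K] (C : Submodule K (ι → K)) : ℕ → Submodule K (ι → K)
  | 0 => Submodule.span K {(1 : ι → K)}
  | t + 1 => mulSpan (codePow C t) C

open Module

universe u

section

variable {K : Type*} [Field K]

theorem Submodule.span_range_proj_comp_subtype_eq_top {ι : Type*} [Finite ι]
    (A : Submodule K (ι → K)) :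
    Submodule.span K (Set.range fun j : ι ↦ (LinearMap.proj j : (ι → K) →ₗ[K] K) ∘ₗ A.subtype)
      = ⊤ := by
  classical
  have hproj : (fun j : ι ↦ (LinearMap.proj j : (ι → K) →ₗ[K] K)) = (Pi.basisFun K ι).dualBasis :=
    funext fun j ↦ LinearMap.ext fun x ↦ by simp
  -- restriction of functionals to `A` is onto and sends the coordinate dual basis to our family
  rw [← LinearMap.range_eq_top.mpr (LinearMap.dualMap_surjective_of_injective A.injective_subtype),
    LinearMap.range_eq_map, ← Basis.span_eq (Pi.basisFun K ι).dualBasis, ← hproj,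
    Submodule.map_span, ← Set.range_comp]
  rfl

/-- `s` is an information set of `A`: in the basis `e`, the columns indexed by `s` form an
identity matrix. -/
theorem Submodule.exists_basis_biorthogonal {ι : Type u} [Finite ι] (A : Submodule K (ι → K)) :
    ∃ (κ : Type u) (s : κ → ι) (e : Basis κ K A),
      (∀ k, (e k : ι → K) (s k) = 1) ∧ Pairwise fun k l ↦ (e k : ι → K) (s l) = 0 := by
  classical
  obtain ⟨κ, s, hs, hspan, hli⟩ := exists_linearIndependent' K
    fun j : ι ↦ (LinearMap.proj j : (ι → K) →ₗ[K] K) ∘ₗ A.subtype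
  have : Finite κ := Finite.of_injective s hs
  rw [A.span_range_proj_comp_subtype_eq_top] at hspan
  let b : Basis κ K (Dual K A) := Basis.mk hli hspan.ge
  let e := b.dualBasis.map (evalEquiv K A).symm
  have he : ∀ k l, (e k : ι → K) (s l) = b.dualBasis k (b l) := fun k l ↦ by
    have h := apply_evalEquiv_symm_apply K A (b l) (b.dualBasis k)
    rwa [Basis.mk_apply] at h ⊢
  refine ⟨κ, s, e, fun k ↦ ?_, fun k l hkl ↦ ?_⟩
  · rw [he, b.dualBasis_apply_self, if_pos rfl]
  · change (e k : ι → K) (s l) = 0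
    rw [he, b.dualBasis_apply_self, if_neg (Ne.symm hkl)]

theorem mulSpan_apply_eq_zero {ι : Type*} (C D : Submodule K (ι → K)) {j : ι}
    (hD : ∀ d ∈ D, d j = 0) {x : ι → K} (hx : x ∈ mulSpan C D) : x j = 0 := by
  suffices mulSpan C D ≤ LinearMap.ker (LinearMap.proj j : (ι → K) →ₗ[K] K) from this hx
  refine Submodule.span_le.mpr ?_
  rintro _ ⟨c, -, d, hd, rfl⟩
  simp [hD d hd]

theorem finrank_le_finrank_mulSpan {ι : Type*} [Finite ι] (A C : Submodule K (ι → K))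
    (hsupp : ∀ j, (∀ c ∈ C, c j = 0) → ∀ a ∈ A, a j = 0) :
    finrank K A ≤ finrank K (mulSpan A C) := by
  obtain ⟨κ, s, e, he_one, he_zero⟩ := A.exists_basis_biorthogonal
  have hC : ∀ k, ∃ c ∈ C, c (s k) ≠ 0 := fun k ↦ by
    by_contra! h
    simpa [he_one k] using hsupp (s k) h (e k) (e k).2
  choose c hcC hc using hC
  let v : κ → mulSpan A C := fun k ↦ ⟨(c k (s k))⁻¹ • (e k * c k),
    Submodule.smul_mem _ _ (Submodule.subset_span ⟨e k, (e k).2, c k, hcC k, rfl⟩)⟩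
  let f : κ → Dual K (mulSpan A C) := fun l ↦ LinearMap.proj (s l) ∘ₗ (mulSpan A C).subtype
  have hv : LinearIndependent K v := by
    refine LinearIndependent.of_pairwise_dual_eq_zero_one v f (fun l k hlk ↦ ?_) (fun k ↦ ?_)
    · simp [v, f, he_zero hlk.symm]
    · simp [v, f, he_one k, hc k]
  have := Module.Finite.finite_basis e
  have := Fintype.ofFinite κ
  rw [finrank_eq_card_basis e]
  exact hv.fintype_card_le_finrank

end

theorem stmt7_general (K : Type*) [Field K] (n : ℕ)
    (C : Submodule K (Fin n → K)) (t : ℕ) (ht : 1 ≤ t) :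
    Module.finrank K (codePow C t) ≤ Module.finrank K (codePow C (t + 1)) := by
  obtain ⟨t, rfl⟩ := Nat.exists_eq_add_of_le' ht
  exact finrank_le_finrank_mulSpan _ C fun j hC a ha ↦ mulSpan_apply_eq_zero _ C hC ha

/-- for a nonzero linear code `C`, `dim C^⟨t+1⟩ ≥ dim C^⟨t⟩` for all `t ≥ 1`. -/
theorem stmt7 (K : Type*) [Field K] [Finite K] (n : ℕ)
    (C : Submodule K (Fin n → K)) (hC : C ≠ ⊥) (t : ℕ) (ht : 1 ≤ t) :
    Module.finrank K (codePow C t) ≤ Module.finrank K (codePow C (t + 1)) :=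
  stmt7_general K n C t ht
end
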